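/- arXiv:1205.6432 — 2 statements merged into one kernel-verified Lean document; each statement's English description precedes it below -/
import Mathlib

section
/- For all integers d ≥ 2, k ≥ 2, l ≥ 2 and any code matrix M ∈ ℝ^{k×l}: if there exists a q-sensitive vector for M, then the Natarajan dimension of the ECOC class W^d_M built on halfspaces over ℝ^d satisfies d_N(W^d_M) ≥ d·q. -/
open MeasureTheory
open scoped ENNReal

noncomputable def argmaxFin {k : ℕ} [NeZero k] (f : Fin k → ℝ) : Fin k :=
  (Finset.univ.filter fun i => ∀ j, f j ≤ f i).min' (by
    obtain ⟨i, -, hi⟩ := Finset.exists_max_image (Finset.univ : Finset (Fin k)) f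
      ⟨⟨0, Nat.pos_of_ne_zero (NeZero.ne k)⟩, Finset.mem_univ _⟩
    exact ⟨i, Finset.mem_filter.mpr ⟨Finset.mem_univ _, fun j => hi j (Finset.mem_univ _)⟩⟩)

def aug {d : ℕ} (x : Fin d → ℝ) : Fin (d + 1) → ℝ := Fin.snoc x 1

/-- halfspaces over ℝ^d, `true` ↔ +1, sign(0) = 1 -/
def halfspace (d : ℕ) : Set ((Fin d → ℝ) → Bool) :=
  { h | ∃ w : Fin (d + 1) → ℝ, h = fun x => decide (0 ≤ ∑ i, w i * aug x i) }

noncomputable def msvm (d k : ℕ) [NeZero k] : Set ((Fin d → ℝ) → Fin k) :=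
  { h | ∃ W : Fin k → Fin (d + 1) → ℝ,
      h = fun x => argmaxFin (fun i => ∑ j, W i j * aug x j) }

def NShatters {X Y : Type*} (H : Set (X → Y)) (S : Set X) : Prop :=
  ∃ f₁ f₂ : X → Y, (∀ x ∈ S, f₁ x ≠ f₂ x) ∧
    ∀ T ⊆ S, ∃ g ∈ H, (∀ x ∈ T, g x = f₁ x) ∧ ∀ x ∈ S \ T, g x = f₂ x

def GShatters {X Y : Type*} (H : Set (X → Y)) (S : Set X) : Prop :=
  ∃ f : X → Y, ∀ T ⊆ S, ∃ g ∈ H, (∀ x ∈ T, g x = f x) ∧ ∀ x ∈ S \ T, g x ≠ f x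

def VCDimLE {X : Type*} (H : Set (X → Bool)) (d : ℕ) : Prop :=
  ∀ S : Finset X, (∀ b : X → Bool, ∃ h ∈ H, ∀ x ∈ S, h x = b x) → S.card ≤ d

inductive LTree (k : ℕ) : Type where
  | leaf : Fin k → LTree k
  | node : LTree k → LTree k → LTree k

def LTree.labels {k : ℕ} : LTree k → List (Fin k)
  | .leaf i => [i]
  | .node l r => l.labels ++ r.labels

/-- `T` is a tree for `k` classes: its leaf labels form a bijection with `[k]`. -/
def LTree.IsTreeFor {k : ℕ} (T : LTree k) : Prop := T.labels.Perm (List.finRange k)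

def treeClass {X : Type*} {k : ℕ} (H : Set (X → Bool)) : LTree k → Set (X → Fin k)
  | .leaf i => {fun _ => i}
  | .node l r => { f | ∃ c ∈ H, ∃ fl ∈ treeClass H l, ∃ fr ∈ treeClass H r,
      f = fun x => if c x then fr x else fl x }

def treesClass {X : Type*} (H : Set (X → Bool)) (k : ℕ) : Set (X → Fin k) :=
  ⋃ T ∈ { T : LTree k | T.IsTreeFor }, treeClass H T

noncomputable def decode {k : ℕ} [NeZero k] {J : Type*} [Fintype J]
    (M : Fin k → J → ℝ) (u : J → Bool) : Fin k :=
  argmaxFin (fun i => ∑ j, M i j * (if u j then (1 : ℝ) else -1))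

noncomputable def ecocClass {X : Type*} {k : ℕ} [NeZero k] {J : Type*} [Fintype J]
    (H : Set (X → Bool)) (M : Fin k → J → ℝ) : Set (X → Fin k) :=
  { g | ∃ h : J → X → Bool, (∀ j, h j ∈ H) ∧ g = fun x => decode M (fun j => h j x) }

def ovaCode (k : ℕ) : Fin k → Fin k → ℝ := fun i j => if i = j then 1 else -1

def apCode (k : ℕ) : Fin k → { p : Fin k × Fin k // p.1 < p.2 } → ℝ :=
  fun i p => if i = p.1.1 then -1 else if i = p.1.2 then 1 else 0

noncomputable def errStar {X : Type*} [MeasurableSpace X] {k : ℕ}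
    (D : Measure (X × Fin k)) (H : Set (X → Fin k)) : ℝ≥0∞ :=
  ⨅ h ∈ H, D { p | h p.1 ≠ p.2 }

noncomputable def errStarBin {X : Type*} [MeasurableSpace X]
    (Q : Measure (X × Bool)) (H : Set (X → Bool)) : ℝ≥0∞ :=
  ⨅ h ∈ H, Q { p | h p.1 ≠ p.2 }

inductive PTree : Type where
  | leaf : PTree
  | node : PTree → PTree → PTree

def PTree.nLeaves : PTree → ℕ
  | .leaf => 1
  | .node l r => l.nLeaves + r.nLeaves

def PTree.leftLeaves : PTree → ℕ
  | .leaf => 0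
  | .node l _ => l.nLeaves

def PTree.rightLeaves : PTree → ℕ
  | .leaf => 0
  | .node _ r => r.nLeaves

def PTree.labelAux {k : ℕ} (f : ℕ → Fin k) : PTree → ℕ → LTree k
  | .leaf, n => .leaf (f n)
  | .node l r, n => .node (PTree.labelAux f l n) (PTree.labelAux f r (n + l.nLeaves))


/-!
Choose q coordinates `j_b` of `u` whose flip changes the decoded label. The `d * q` points form
q blocks of d points; block `b` lies on the tangent line to the parabola `x₁ = x₀²` at `(b, b²)`,
spread out into the remaining `d - 2` coordinates. The quadratic `x₁ - 2 b x₀ + b²` vanishes on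
that tangent line and grows at least linearly in `|b' - b|` on block `b'`, so it dominates an
affine perturbation interpolating any labelling of block `b`: one halfspace labels block `b` at
will and is constant on all other blocks. Taking it as the `j_b`-th binary classifier (and
constants elsewhere), every point of block `b` decodes to `M̃ u` or to `M̃ (u ⊕ e_{j_b})`, as
prescribed.
-/

open Function Matrix

def boolSign (b : Bool) : ℝ := if b then 1 else -1

lemma abs_boolSign (b : Bool) : |boolSign b| = 1 := by
  cases b <;> norm_num [boolSign]

lemma decide_nonneg_boolSign (b : Bool) : decide (0 ≤ boolSign b) = b := by
  cases b <;> norm_num [boolSign]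

lemma decide_nonneg_boolSign_mul_add (b : Bool) {Q E : ℝ} (h : |E| < Q) :
    decide (0 ≤ boolSign b * Q + E) = b := by
  cases b <;> simp only [boolSign, Bool.false_eq_true, if_false, if_true,
    decide_eq_false_iff_not, decide_eq_true_eq, not_le] <;> linarith [abs_lt.1 h]

/-- `H` shatters each block `P b` while taking one constant value on all the other blocks. -/
def BlockShatters {X B A : Type*} (H : Set (X → Bool)) (P : B → A → X) : Prop :=
  ∀ b (σ : A → Bool) (v : Bool), ∃ h ∈ H, (∀ a, h (P b a) = σ a) ∧ ∀ b' ≠ b, ∀ a, h (P b' a) = v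

namespace BlockShatters

variable {X B A : Type*} {H : Set (X → Bool)} {P : B → A → X}

theorem injective (hP : BlockShatters H P) : Injective (uncurry P) := by
  classical
  rintro ⟨b, a⟩ ⟨b', a'⟩ hx
  by_cases hb : b' = b
  · subst hb
    obtain ⟨h, -, hσ, -⟩ := hP b' (fun x => decide (x = a)) false
    have := congrArg h hx
    simp only [uncurry_apply_pair, hσ, decide_true] at this
    rw [of_decide_eq_true this.symm]
  · obtain ⟨h, -, hσ, hv⟩ := hP b (fun _ => true) false
    have := congrArg h hx
    simp [uncurry_apply_pair, hσ, hv b' hb] at this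

end BlockShatters

lemma extend_apply_eq_update {X B J : Type*} [DecidableEq J] {ι : B → J} (hι : Injective ι)
    (g : B → X → Bool) (u : J → Bool) {b : B} {x : X} (hx : ∀ b' ≠ b, g b' x = u (ι b')) :
    (fun c => extend ι g (fun c _ => u c) c x) = update u (ι b) (g b x) := by
  funext c
  by_cases hcb : c = ι b
  · subst hcb
    simp [hι.extend_apply]
  rw [update_of_ne hcb]
  by_cases hc : ∃ b', ι b' = c
  · obtain ⟨b', rfl⟩ := hc
    rw [hι.extend_apply, hx b' (fun h => hcb (h ▸ rfl))]
  · rw [extend_apply' _ _ _ hc]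

theorem BlockShatters.nShatters_ecocClass {X B A J : Type*} [Fintype J] [DecidableEq J] {k : ℕ}
    [NeZero k] {H : Set (X → Bool)} (hconst : ∀ c : Bool, (fun _ => c) ∈ H) {P : B → A → X}
    (hP : BlockShatters H P) (M : Fin k → J → ℝ) (u : J → Bool) {ι : B → J} (hι : Injective ι)
    (hsens : ∀ b, decode M u ≠ decode M (update u (ι b) (!u (ι b)))) :
    NShatters (ecocClass H M) (Set.range (uncurry P)) := by
  classical
  set flipped : B → J → Bool := fun b => update u (ι b) (!u (ι b))
  refine ⟨fun _ => decode M u,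
    extend (uncurry P) (fun p => decode M (flipped p.1)) (fun _ => decode M u), ?_, fun T hT => ?_⟩
  · rintro _ ⟨⟨b, a⟩, rfl⟩
    rw [hP.injective.extend_apply]
    exact hsens b
  choose g hgH hgσ hgv using fun b =>
    hP b (fun a => if P b a ∈ T then u (ι b) else !u (ι b)) (u (ι b))
  have hvec : ∀ b a, (fun c => extend ι g (fun c _ => u c) c (P b a)) =
      if P b a ∈ T then u else flipped b := by
    intro b a
    rw [extend_apply_eq_update hι g u (fun b' hb' => hgv b' b hb'.symm a), hgσ]
    split_ifs <;> simp [flipped]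
  refine ⟨_, ⟨fun c => extend ι g (fun c _ => u c) c, fun c => ?_, rfl⟩, ?_, ?_⟩
  · by_cases hc : ∃ b, ι b = c
    · obtain ⟨b, rfl⟩ := hc
      simpa [hι.extend_apply] using hgH b
    · simpa [extend_apply' _ _ _ hc] using hconst (u c)
  · rintro _ hx
    obtain ⟨⟨b, a⟩, rfl⟩ := hT hx
    simp only [uncurry_apply_pair] at hx ⊢
    rw [hvec, if_pos hx]
  · rintro _ ⟨⟨⟨b, a⟩, rfl⟩, hx⟩
    simp only [uncurry_apply_pair] at hx ⊢
    rw [hvec, if_neg hx]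
    exact (hP.injective.extend_apply (fun p => decode M (flipped p.1)) _ (b, a)).symm

lemma mem_halfspace_of_dotProduct {d : ℕ} (w : Fin d → ℝ) (b : ℝ) :
    (fun x => decide (0 ≤ w ⬝ᵥ x + b)) ∈ halfspace d := by
  refine ⟨Fin.snoc w b, funext fun x => ?_⟩
  simp only [Fin.sum_univ_castSucc, aug, Fin.snoc_castSucc, Fin.snoc_last, mul_one, dotProduct]
  rfl

lemma const_mem_halfspace {d : ℕ} (c : Bool) : (fun _ => c) ∈ halfspace d := by
  simpa [decide_nonneg_boolSign] using mem_halfspace_of_dotProduct (d := d) 0 (boolSign c)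

noncomputable section Blocks

variable (n : ℕ)

def blockOffset (i : Fin (n + 2)) : ℝ := if i = 1 then 1 / 4 else 0

def blockTail (i : Fin (n + 2)) (k : Fin n) : ℝ := if k.succ.succ = i then 1 else 0

def blockPoint (z : ℝ) (i : Fin (n + 2)) : Fin (n + 2) → ℝ :=
  vecCons (z + blockOffset n i) (vecCons (z ^ 2 + 2 * z * blockOffset n i) (blockTail n i))

/-- Together with `separatorBias`: the affine map `20 s (x₁ - 2 z x₀ + z²)`, which vanishes on the
block at `z`, plus the affine map taking the value `t i` at the `i`-th point of that block. -/
def separatorWeight (z : ℝ) (t : Fin (n + 2) → ℝ) (s : ℝ) : Fin (n + 2) → ℝ :=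
  vecCons (4 * (t 1 - t 0) - 40 * s * z) (vecCons (20 * s) fun k => t k.succ.succ - t 0)

def separatorBias (z : ℝ) (t : Fin (n + 2) → ℝ) (s : ℝ) : ℝ :=
  20 * s * z ^ 2 - 4 * (t 1 - t 0) * z + t 0

variable {n}

lemma abs_blockOffset_le (i : Fin (n + 2)) : |blockOffset n i| ≤ 1 / 4 := by
  unfold blockOffset
  split_ifs <;> norm_num

lemma blockOffset_interpolate (t : Fin (n + 2) → ℝ) (i : Fin (n + 2)) :
    4 * (t 1 - t 0) * blockOffset n i + (fun k => t k.succ.succ - t 0) ⬝ᵥ blockTail n i + t 0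
      = t i := by
  induction i using Fin.cases with
  | zero => simp [blockOffset, blockTail, dotProduct, Fin.succ_ne_zero]
  | succ i =>
    induction i using Fin.cases with
    | zero => simp [blockOffset, blockTail, dotProduct, Fin.succ_succ_ne_one]; ring
    | succ k => simp [blockOffset, blockTail, dotProduct, Fin.succ_succ_ne_one]

lemma dotProduct_blockPoint_add_separatorBias (z z' : ℝ) (t : Fin (n + 2) → ℝ) (s : ℝ)
    (i : Fin (n + 2)) :
    separatorWeight n z t s ⬝ᵥ blockPoint n z' i + separatorBias n z t s =
      s * (20 * ((z' - z) ^ 2 + 2 * blockOffset n i * (z' - z)))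
        + (4 * (t 1 - t 0) * (z' - z) + t i) := by
  rw [← blockOffset_interpolate t i]
  simp only [separatorWeight, separatorBias, blockPoint, cons_dotProduct_cons]
  ring

end Blocks

lemma abs_mul_add_lt_of_one_le_abs {Δ α c t : ℝ} (hΔ : 1 ≤ |Δ|) (hα : |α| ≤ 1 / 4) (hc : |c| ≤ 8)
    (ht : |t| ≤ 1) : |c * Δ + t| < 20 * (Δ ^ 2 + 2 * α * Δ) := by
  have hlin : |c * Δ + t| ≤ 8 * |Δ| + 1 := by
    calc |c * Δ + t| ≤ |c| * |Δ| + |t| := by rw [← abs_mul]; exact abs_add_le _ _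
      _ ≤ 8 * |Δ| + 1 := by gcongr
  have hcross : |2 * α * Δ| ≤ |Δ| / 2 := by
    rw [abs_mul, abs_mul, abs_two]
    nlinarith [abs_nonneg Δ]
  have hsq : |Δ| ≤ Δ ^ 2 := by
    rw [← sq_abs]
    nlinarith
  linarith [neg_abs_le (2 * α * Δ)]

theorem halfspace_blockShatters (n : ℕ) {B : Type*} {z : B → ℤ} (hz : Injective z) :
    BlockShatters (halfspace (n + 2)) (fun b => blockPoint n (z b)) := by
  intro b σ v
  set t := fun i => boolSign (σ i)
  refine ⟨_, mem_halfspace_of_dotProduct (separatorWeight n (z b) t (boolSign v))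
    (separatorBias n (z b) t (boolSign v)), fun i => ?_, fun b' hb' i => ?_⟩
  · simpa [dotProduct_blockPoint_add_separatorBias] using decide_nonneg_boolSign (σ i)
  · rw [dotProduct_blockPoint_add_separatorBias]
    refine decide_nonneg_boolSign_mul_add v
      (abs_mul_add_lt_of_one_le_abs ?_ (abs_blockOffset_le i) ?_ ?_)
    · exact_mod_cast Int.one_le_abs (sub_ne_zero.2 (hz.ne hb'))
    · rw [abs_mul, abs_of_pos four_pos]
      linarith [abs_sub (t 1) (t 0), abs_boolSign (σ 1), abs_boolSign (σ 0)]
    · exact (abs_boolSign (σ i)).le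

theorem stmt16_general (d k l q : ℕ) [NeZero k] (hd : 2 ≤ d)
    (M : Fin k → Fin l → ℝ) (u : Fin l → Bool)
    (hu : q ≤ (Finset.univ.filter (fun j : Fin l =>
      decode M u ≠ decode M (Function.update u j (!u j)))).card) :
    ∃ S : Finset (Fin d → ℝ), NShatters (ecocClass (halfspace d) M) ↑S ∧ d * q ≤ S.card := by
  obtain ⟨n, rfl⟩ : ∃ n, d = n + 2 := ⟨d - 2, by omega⟩
  obtain ⟨ι⟩ : Nonempty (Fin q ↪ {j // decode M u ≠ decode M (update u j (!u j))}) :=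
    Function.Embedding.nonempty_of_card_le (by simpa [Fintype.card_subtype] using hu)
  have hP := halfspace_blockShatters n (z := fun a : Fin q => ((a : ℕ) : ℤ))
    (Nat.cast_injective.comp Fin.val_injective)
  refine ⟨Finset.univ.image (uncurry fun a : Fin q => blockPoint n (((a : ℕ) : ℤ) : ℝ)), ?_, ?_⟩
  · simpa using hP.nShatters_ecocClass const_mem_halfspace M u
      (Subtype.val_injective.comp ι.injective) fun a => (ι a).2
  · rw [Finset.card_image_of_injective _ hP.injective]
    simp [mul_comm]

/-- For all integers d, k, l ≥ 2 and any code matrix M ∈ ℝ^{k×l}: if there exists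
a q-sensitive vector u for M (at least q coordinate flips of u change the decoded label), then
the Natarajan dimension of the ECOC class W^d_M built on halfspaces over ℝ^d is at least d·q. -/
theorem stmt16 (d k l q : ℕ) [NeZero k] (hd : 2 ≤ d) (hk : 2 ≤ k) (hl : 2 ≤ l)
    (M : Fin k → Fin l → ℝ) (u : Fin l → Bool)
    (hu : q ≤ (Finset.univ.filter (fun j : Fin l =>
      decode M u ≠ decode M (Function.update u j (!u j)))).card) :
    ∃ S : Finset (Fin d → ℝ), NShatters (ecocClass (halfspace d) M) ↑S ∧ d * q ≤ S.card :=
  stmt16_general d k l q hd M u hu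
end

section
/- Let k ≥ 2 be an integer, let β₁,…,β_k ≥ 0 and γ₁,…,γ_k ∈ ℝ with |γ_i| ≤ β_i for all i. Fix an integer j ∈ {1,…,⌊k/2⌋} and set μ = j/k. Let (X₁,…,X_k) ∈ {±1}^k be sampled uniformly from the set {(x₁,…,x_k) ∈ {±1}^k : Σ_{i=1}^k (x_i + 1)/2 = μk}. Define Y_i = β_i + X_i γ_i and α_i = β_i + |γ_i|, and assume Σ_{i=1}^k α_i = 1. Then for every ε > 0, P[Σ_{i=1}^k Y_i ≤ μ − ε] ≤ 2·exp(−ε²/(2·Σ_{i=1}^k α_i²)). -/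
open MeasureTheory
open scoped ENNReal

/-!
Let `S` be the set of coordinates equal to `+1`, a uniform `j`-subset. Then
`∑ Yᵢ = ∑ βᵢ - ∑ γᵢ + ∑_{i ∈ S} 2γᵢ`, and its mean is at least `μ` because
`|γᵢ| ≤ βᵢ`, `∑ αᵢ = 1` and `μ ≤ 1/2`. Splitting `2γ` into positive and negative parts,
the event forces a lower deviation `ε/2` of `∑_{i ∈ S} (2γᵢ)⁺` or an upper deviation `ε/2`
of `∑_{i ∈ S} (2γᵢ)⁻` from its mean; this gives the factor `2`, and `∑ (2γᵢ)² ≤ ∑ αᵢ²`.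

For `c ≥ 0` the exponential moment of `∑_{i ∈ S} c i` is dominated by the one for independent
Bernoulli(`μ`) inclusions: writing `exp (c i) = 1 + y i` with `y ≥ 0` and expanding, the monomial
`∏_{i ∈ T} y i` occurs `C(k - |T|, j - |T|) ≤ C(k, j) μ ^ |T|` times. Hoeffding's lemma and
Chernoff's bound then bound the upper tail by `exp (-2t² / ∑ c²)`; the lower tail is the upper
tail of the complement `Sᶜ`, a uniform `(k - j)`-subset.
-/

open Finset Real ProbabilityTheory

theorem bernoulli_mgf_le_exp {p : ℝ} (hp₀ : 0 ≤ p) (hp₁ : p ≤ 1) (x : ℝ) :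
    p * exp x + (1 - p) ≤ exp (p * x + x ^ 2 / 8) := by
  set μ : Measure ℝ := Ber(x, 0, ⟨p, hp₀, hp₁⟩)
  have hsupp : ∀ᵐ ω ∂μ, ω ∈ Set.Icc (min x 0) (max x 0) := by
    refine ae_add_measure_iff.2 ⟨Measure.ae_smul_measure ?_ _, Measure.ae_smul_measure ?_ _⟩ <;>
      exact (ae_dirac_iff measurableSet_Icc).2 (by simp)
  have h := (hasSubgaussianMGF_of_mem_Icc measurable_id.aemeasurable hsupp).mgf_le 1
  have hwidth : |max x 0 - min x 0| = |x| := by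
    rcases le_total x 0 with hx | hx <;> simp [hx]
  simp only [mgf, integral_bernoulliMeasure, μ, id, smul_eq_mul, mul_zero, add_zero, zero_sub,
    one_mul, one_pow, mul_one, NNReal.coe_pow, NNReal.coe_div, coe_nnnorm, Real.norm_eq_abs,
    hwidth, div_pow, sq_abs, NNReal.coe_ofNat] at h
  calc p * exp x + (1 - p)
      = (p * exp (x - p * x) + (1 - p) * exp (-(p * x))) * exp (p * x) := by
        rw [add_mul, mul_assoc, mul_assoc, ← exp_add, ← exp_add, sub_add_cancel, neg_add_cancel,
          exp_zero, mul_one]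
    _ ≤ exp (x ^ 2 / 2 ^ 2 / 2) * exp (p * x) := by gcongr
    _ = exp (p * x + x ^ 2 / 8) := by rw [← exp_add]; ring_nf

theorem Nat.descFactorial_mul_pow_le {j k : ℕ} (hjk : j ≤ k) (t : ℕ) :
    j.descFactorial t * k ^ t ≤ k.descFactorial t * j ^ t := by
  induction t with
  | zero => simp
  | succ t ih =>
    have hstep : (j - t) * k ≤ (k - t) * j := by
      rw [Nat.sub_mul, Nat.sub_mul, mul_comm j k]
      exact Nat.sub_le_sub_left (Nat.mul_le_mul_left t hjk) _
    calc j.descFactorial (t + 1) * k ^ (t + 1)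
        = ((j - t) * k) * (j.descFactorial t * k ^ t) := by
          rw [Nat.descFactorial_succ, pow_succ]; ring
      _ ≤ ((k - t) * j) * (k.descFactorial t * j ^ t) := Nat.mul_le_mul hstep ih
      _ = k.descFactorial (t + 1) * j ^ (t + 1) := by
          rw [Nat.descFactorial_succ, pow_succ]; ring

theorem Nat.choose_sub_mul_pow_le {j k t : ℕ} (hjk : j ≤ k) (htj : t ≤ j) :
    (k - t).choose (j - t) * k ^ t ≤ k.choose j * j ^ t := by
  have hpos : 0 < k.descFactorial t := Nat.descFactorial_pos.2 (htj.trans hjk)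
  have hchoose : (k - t).choose (j - t) * k.descFactorial t = k.choose j * j.descFactorial t := by
    rw [Nat.descFactorial_eq_factorial_mul_choose, Nat.descFactorial_eq_factorial_mul_choose]
    linear_combination t.factorial * (Nat.choose_mul (n := k) htj).symm
  refine Nat.le_of_mul_le_mul_right ?_ hpos
  calc (k - t).choose (j - t) * k ^ t * k.descFactorial t
      = k.choose j * (j.descFactorial t * k ^ t) := by rw [mul_right_comm, hchoose, mul_assoc]
    _ ≤ k.choose j * (k.descFactorial t * j ^ t) :=
        Nat.mul_le_mul_left _ (Nat.descFactorial_mul_pow_le hjk t)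
    _ = k.choose j * j ^ t * k.descFactorial t := by ring

theorem Nat.cast_choose_sub_le {j k t : ℕ} (hjk : j ≤ k) (htj : t ≤ j) :
    ((k - t).choose (j - t) : ℝ) ≤ k.choose j * ((j : ℝ) / k) ^ t := by
  have hkt : (0 : ℝ) < (k : ℝ) ^ t := by
    rcases Nat.eq_zero_or_pos k with rfl | hk
    · simp [Nat.le_zero.1 (htj.trans hjk)]
    · positivity
  rw [div_pow, ← mul_div_assoc, le_div_iff₀ hkt]
  exact_mod_cast Nat.choose_sub_mul_pow_le hjk htj

theorem card_filter_le_exp_neg_mul_sum_exp {α : Type*} (s : Finset α) (f : α → ℝ) (a : ℝ) :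
    (#(s.filter (a ≤ f ·)) : ℝ) ≤ exp (-a) * ∑ x ∈ s, exp (f x) := by
  rw [exp_neg, inv_mul_eq_div, le_div_iff₀ (exp_pos a), ← nsmul_eq_mul]
  calc #(s.filter (a ≤ f ·)) • exp a ≤ ∑ x ∈ s.filter (a ≤ f ·), exp (f x) :=
        card_nsmul_le_sum _ _ _ fun x hx => exp_le_exp.2 (mem_filter.1 hx).2
    _ ≤ ∑ x ∈ s, exp (f x) := sum_le_sum_of_subset_of_nonneg (filter_subset _ _)
        fun x _ _ => (exp_pos _).le

section

variable {ι : Type*} [Fintype ι]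

theorem sum_add_ite_mul_eq (β γ : ι → ℝ) (b : ι → Bool) :
    ∑ i, (β i + (if b i then (1 : ℝ) else -1) * γ i) =
      ∑ i, β i - ∑ i, γ i + ∑ i ∈ univ.filter (fun i => b i), 2 * γ i := by
  rw [sum_filter, sub_add_eq_add_sub, ← sum_add_distrib, ← sum_sub_distrib]
  refine sum_congr rfl fun i _ => ?_
  split_ifs <;> ring

theorem le_sum_sub_sum_add_mul_sum {β γ : ι → ℝ} (hγ : ∀ i, |γ i| ≤ β i)
    (hsum : ∑ i, (β i + |γ i|) = 1) {μ : ℝ} (hμ₀ : 0 ≤ μ) (hμ : 2 * μ ≤ 1) :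
    μ ≤ ∑ i, β i - ∑ i, γ i + μ * ∑ i, 2 * γ i := by
  have hγ_le_abs : ∑ i, γ i ≤ ∑ i, |γ i| := sum_le_sum fun i _ => le_abs_self _
  have habs_le_β : ∑ i, |γ i| ≤ ∑ i, β i := sum_le_sum fun i _ => hγ i
  rw [sum_add_distrib] at hsum
  rw [← mul_sum]
  nlinarith [mul_nonneg (sub_nonneg.2 hμ) (sub_nonneg.2 hγ_le_abs),
    mul_nonneg (by linarith : 0 ≤ 1 - μ) (sub_nonneg.2 habs_le_β)]

variable [DecidableEq ι]

theorem sum_powersetCard_prod_one_add_le {j : ℕ} (hj : j ≤ Fintype.card ι) {y : ι → ℝ}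
    (hy : ∀ i, 0 ≤ y i) :
    ∑ S ∈ powersetCard j univ, ∏ i ∈ S, (1 + y i) ≤
      (Fintype.card ι).choose j * ∏ i, (1 + (j : ℝ) / Fintype.card ι * y i) := by
  simp only [prod_one_add, prod_mul_distrib, mul_sum]
  rw [sum_comm' (t' := univ.powerset) (s' := fun T => (powersetCard j univ).filter (T ⊆ ·))
    (fun S T => by simp [mem_powersetCard, and_comm])]
  refine sum_le_sum fun T _ => ?_
  rw [sum_const, nsmul_eq_mul, ← mul_assoc]
  have hyT : 0 ≤ ∏ i ∈ T, y i := prod_nonneg fun i _ => hy i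
  by_cases hT : #T ≤ j
  · have hsupersets : #((powersetCard j univ).filter (T ⊆ ·)) =
        (Fintype.card ι - #T).choose (j - #T) := by
      simpa using card_filter_powersetCard_subset T univ j (subset_univ T) hT
    rw [prod_const, hsupersets]
    exact mul_le_mul_of_nonneg_right (Nat.cast_choose_sub_le hj hT) hyT
  · have hempty : (powersetCard j univ).filter (T ⊆ ·) = ∅ := filter_false_of_mem
      fun S hS hTS => hT ((card_le_card hTS).trans_eq (mem_powersetCard.1 hS).2)
    rw [hempty, card_empty, Nat.cast_zero, zero_mul]
    positivity

theorem sum_powersetCard_exp_sum_le {j : ℕ} (hj : j ≤ Fintype.card ι) {c : ι → ℝ}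
    (hc : ∀ i, 0 ≤ c i) :
    ∑ S ∈ powersetCard j univ, exp (∑ i ∈ S, c i) ≤ (Fintype.card ι).choose j *
      exp ((j : ℝ) / Fintype.card ι * ∑ i, c i + (∑ i, c i ^ 2) / 8) := by
  set μ : ℝ := (j : ℝ) / Fintype.card ι
  have hμ₀ : 0 ≤ μ := by positivity
  have hμ₁ : μ ≤ 1 := div_le_one_of_le₀ (by exact_mod_cast hj) (Nat.cast_nonneg _)
  have hexp : ∀ i, exp (c i) = 1 + (exp (c i) - 1) := fun i => by ring
  calc ∑ S ∈ powersetCard j univ, exp (∑ i ∈ S, c i)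
      = ∑ S ∈ powersetCard j univ, ∏ i ∈ S, (1 + (exp (c i) - 1)) := by
        simp only [exp_sum, ← hexp]
    _ ≤ (Fintype.card ι).choose j * ∏ i, (1 + μ * (exp (c i) - 1)) :=
        sum_powersetCard_prod_one_add_le hj fun i => sub_nonneg.2 (one_le_exp (hc i))
    _ ≤ (Fintype.card ι).choose j * ∏ i, exp (μ * c i + c i ^ 2 / 8) := by
        refine mul_le_mul_of_nonneg_left
          (prod_le_prod (fun i _ => ?_) fun i _ => ?_) (by positivity)
        · nlinarith [exp_pos (c i)]
        · linarith [bernoulli_mgf_le_exp hμ₀ hμ₁ (c i)]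
    _ = _ := by rw [← exp_sum, sum_add_distrib, mul_sum, sum_div]

theorem card_mean_add_le_sum_le {j : ℕ} (hj : j ≤ Fintype.card ι) {c : ι → ℝ}
    (hc : ∀ i, 0 ≤ c i) {v t : ℝ} (hv : ∑ i, c i ^ 2 ≤ v) (ht : 0 ≤ t) :
    (#((powersetCard j univ).filter
        fun S => (j : ℝ) / Fintype.card ι * ∑ i, c i + t ≤ ∑ i ∈ S, c i) : ℝ) ≤
      (Fintype.card ι).choose j * exp (-2 * t ^ 2 / v) := by
  set μ : ℝ := (j : ℝ) / Fintype.card ι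
  have hv₀ : 0 ≤ v := (sum_nonneg fun i _ => sq_nonneg (c i)).trans hv
  rcases hv₀.eq_or_lt with hv₀ | hv₀
  -- for `v = 0` the bound is `choose * exp 0`, since `x / 0 = 0`
  · rw [← hv₀, div_zero, exp_zero, mul_one]
    exact_mod_cast (card_filter_le _ _).trans (card_powersetCard _ _).le
  set l := 4 * t / v
  have hl : 0 ≤ l := by positivity
  calc (#((powersetCard j univ).filter fun S => μ * ∑ i, c i + t ≤ ∑ i ∈ S, c i) : ℝ)
      ≤ #((powersetCard j univ).filter
          fun S => l * (μ * ∑ i, c i + t) ≤ ∑ i ∈ S, l * c i) := by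
        refine Nat.cast_le.2 (card_le_card (monotone_filter_right _ fun S _ hS => ?_))
        rw [← mul_sum]
        exact mul_le_mul_of_nonneg_left hS hl
    _ ≤ exp (-(l * (μ * ∑ i, c i + t))) *
          ∑ S ∈ powersetCard j univ, exp (∑ i ∈ S, l * c i) :=
        card_filter_le_exp_neg_mul_sum_exp _ _ _
    _ ≤ exp (-(l * (μ * ∑ i, c i + t))) * ((Fintype.card ι).choose j *
          exp (μ * ∑ i, l * c i + (∑ i, (l * c i) ^ 2) / 8)) := by
        gcongr
        exact sum_powersetCard_exp_sum_le hj fun i => mul_nonneg hl (hc i)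
    _ = (Fintype.card ι).choose j * exp (-(l * t) + l ^ 2 * (∑ i, c i ^ 2) / 8) := by
        rw [mul_left_comm, ← exp_add, ← mul_sum]
        simp only [mul_pow, ← mul_sum]
        ring_nf
    _ ≤ (Fintype.card ι).choose j * exp (-(l * t) + l ^ 2 * v / 8) := by gcongr
    _ = (Fintype.card ι).choose j * exp (-2 * t ^ 2 / v) := by
        simp only [l]
        field_simp
        ring_nf

theorem card_sum_add_le_mean_le_of_nonneg {j : ℕ} (hj : j ≤ Fintype.card ι) {c : ι → ℝ}
    (hc : ∀ i, 0 ≤ c i) {v t : ℝ} (hv : ∑ i, c i ^ 2 ≤ v) (ht : 0 ≤ t) :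
    (#((powersetCard j univ).filter
        fun S => ∑ i ∈ S, c i + t ≤ (j : ℝ) / Fintype.card ι * ∑ i, c i) : ℝ) ≤
      (Fintype.card ι).choose j * exp (-2 * t ^ 2 / v) := by
  have hmean : ((Fintype.card ι - j : ℕ) : ℝ) / Fintype.card ι * ∑ i, c i =
      ∑ i, c i - (j : ℝ) / Fintype.card ι * ∑ i, c i := by
    rcases (Fintype.card ι).eq_zero_or_pos with hι | hι
    · have : IsEmpty ι := Fintype.card_eq_zero_iff.1 hι
      simp
    · rw [Nat.cast_sub hj, sub_div, div_self (by positivity)]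
      ring
  have hcompl (S : Finset ι) : ∑ i ∈ Sᶜ, c i = ∑ i, c i - ∑ i ∈ S, c i := by
    rw [← sum_compl_add_sum S, add_sub_cancel_right]
  rw [← Nat.choose_symm hj]
  refine le_of_eq_of_le (congrArg Nat.cast (card_nbij' (·ᶜ) (·ᶜ) ?_ ?_ ?_ ?_))
    (card_mean_add_le_sum_le (Nat.sub_le _ j) hc hv ht)
  · intro S hS
    simp only [coe_filter, mem_powersetCard_univ, Set.mem_ofPred_eq, card_compl] at hS ⊢
    exact ⟨by omega, by linarith [hcompl S]⟩
  · intro S hS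
    simp only [coe_filter, mem_powersetCard_univ, Set.mem_ofPred_eq, card_compl] at hS ⊢
    exact ⟨by omega, by linarith [hcompl S]⟩
  · exact fun S _ => compl_compl S
  · exact fun S _ => compl_compl S

theorem card_sum_add_le_mean_le {j : ℕ} (hj : j ≤ Fintype.card ι) (c : ι → ℝ) {v t : ℝ}
    (hv : ∑ i, c i ^ 2 ≤ v) (ht : 0 ≤ t) :
    (#((powersetCard j univ).filter
        fun S => ∑ i ∈ S, c i + t ≤ (j : ℝ) / Fintype.card ι * ∑ i, c i) : ℝ) ≤
      2 * (Fintype.card ι).choose j * exp (-t ^ 2 / (2 * v)) := by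
  set μ : ℝ := (j : ℝ) / Fintype.card ι
  have hsplit (S : Finset ι) : ∑ i ∈ S, c i = ∑ i ∈ S, c⁺ i - ∑ i ∈ S, c⁻ i := by
    rw [← sum_sub_distrib]
    exact sum_congr rfl fun i _ => (posPart_sub_negPart (c i)).symm
  have hvPos : ∑ i, c⁺ i ^ 2 ≤ v := (sum_le_sum fun i _ => by
    rcases le_total (c i) 0 with h | h
    · simp [posPart_eq_zero.2 h]; positivity
    · simp [posPart_eq_self.2 h]).trans hv
  have hvNeg : ∑ i, c⁻ i ^ 2 ≤ v := (sum_le_sum fun i _ => by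
    rcases le_total (c i) 0 with h | h
    · simp [negPart_eq_neg.2 h]
    · simp [negPart_eq_zero.2 h]; positivity).trans hv
  set lowerPos :=
    (powersetCard j univ).filter fun S => ∑ i ∈ S, c⁺ i + t / 2 ≤ μ * ∑ i, c⁺ i
  set upperNeg :=
    (powersetCard j univ).filter fun S => μ * ∑ i, c⁻ i + t / 2 ≤ ∑ i ∈ S, c⁻ i
  have hsub : (powersetCard j univ).filter (fun S => ∑ i ∈ S, c i + t ≤ μ * ∑ i, c i) ⊆
      lowerPos ∪ upperNeg := by
    intro S hS
    rw [mem_filter] at hS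
    rw [mem_union, mem_filter, mem_filter]
    by_contra! h
    have hPos := h.1 hS.1
    have hNeg := h.2 hS.1
    rw [hsplit S, hsplit univ] at hS
    linarith [hS.2]
  calc (#((powersetCard j univ).filter fun S => ∑ i ∈ S, c i + t ≤ μ * ∑ i, c i) : ℝ)
      ≤ #lowerPos + #upperNeg := by
        exact_mod_cast (card_le_card hsub).trans (card_union_le _ _)
    _ ≤ (Fintype.card ι).choose j * exp (-2 * (t / 2) ^ 2 / v) +
        (Fintype.card ι).choose j * exp (-2 * (t / 2) ^ 2 / v) := by
        gcongr
        · exact card_sum_add_le_mean_le_of_nonneg hj (fun i => posPart_nonneg _) hvPos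
            (by positivity)
        · exact card_mean_add_le_sum_le hj (fun i => negPart_nonneg _) hvNeg (by positivity)
    _ = 2 * (Fintype.card ι).choose j * exp (-t ^ 2 / (2 * v)) := by
        ring_nf

theorem card_filter_boolFun_eq (j : ℕ) (P : Finset ι → Prop) [DecidablePred P] :
    #(univ.filter fun b : ι → Bool =>
        #(univ.filter fun i => b i) = j ∧ P (univ.filter fun i => b i)) =
      #((powersetCard j univ).filter P) := by
  refine card_nbij' (fun b => univ.filter fun i => b i) (fun S i => decide (i ∈ S))
    ?_ ?_ ?_ ?_
  · intro b hb
    simpa using hb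
  · intro S hS
    simpa using hS
  · intro b _
    funext i
    simp
  · intro S _
    ext i
    simp

theorem card_filter_boolFun_card_eq (j : ℕ) :
    #(univ.filter fun b : ι → Bool => #(univ.filter fun i => b i) = j) =
      (Fintype.card ι).choose j := by
  simpa using card_filter_boolFun_eq j fun _ => True

end

theorem stmt19_general (k : ℕ) (β γ : Fin k → ℝ)
    (hγ : ∀ i, |γ i| ≤ β i)
    (j : ℕ) (hj2 : j ≤ k / 2)
    (hsum : ∑ i, (β i + |γ i|) = 1) (ε : ℝ) (hε : 0 < ε) :
    ((Finset.univ.filter (fun b : Fin k → Bool =>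
        (Finset.univ.filter (fun i => b i)).card = j ∧
        ∑ i, (β i + (if b i then (1 : ℝ) else -1) * γ i) ≤ (j : ℝ) / k - ε)).card : ℝ) ≤
      2 * Real.exp (-ε ^ 2 / (2 * ∑ i, (β i + |γ i|) ^ 2)) *
        ((Finset.univ.filter (fun b : Fin k → Bool =>
          (Finset.univ.filter (fun i => b i)).card = j)).card : ℝ) := by
  have hjk : j ≤ k := hj2.trans (Nat.div_le_self k 2)
  set μ : ℝ := (j : ℝ) / k
  have hμ : 2 * μ ≤ 1 := by
    rw [← mul_div_assoc]
    exact div_le_one_of_le₀ (by exact_mod_cast (by omega : 2 * j ≤ k)) k.cast_nonneg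
  have hmean := le_sum_sub_sum_add_mul_sum hγ hsum (by positivity) hμ
  have hvar : ∑ i, (2 * γ i) ^ 2 ≤ ∑ i, (β i + |γ i|) ^ 2 := sum_le_sum fun i _ => by
    rw [mul_pow, ← sq_abs (γ i)]
    nlinarith [hγ i, abs_nonneg (γ i)]
  calc (#(univ.filter fun b : Fin k → Bool => #(univ.filter fun i => b i) = j ∧
        ∑ i, (β i + (if b i then (1 : ℝ) else -1) * γ i) ≤ μ - ε) : ℝ)
      ≤ #((powersetCard j univ).filter
          fun S => ∑ i ∈ S, 2 * γ i + ε ≤ μ * ∑ i, 2 * γ i) := by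
        rw [← card_filter_boolFun_eq]
        refine Nat.cast_le.2 (card_le_card (monotone_filter_right _ fun b _ hb => ⟨hb.1, ?_⟩))
        linarith [hb.2, sum_add_ite_mul_eq β γ b]
    _ ≤ 2 * k.choose j * exp (-ε ^ 2 / (2 * ∑ i, (β i + |γ i|) ^ 2)) := by
        simpa using card_sum_add_le_mean_le (by simpa using hjk) (fun i => 2 * γ i) hvar hε.le
    _ = _ := by
        rw [card_filter_boolFun_card_eq, Fintype.card_fin]
        ring

/-- Hoeffding-type bound for sampling without replacement. Let β_i ≥ 0,
|γ_i| ≤ β_i, j ∈ {1,…,⌊k/2⌋}, μ = j/k, α_i = β_i + |γ_i| with Σ α_i = 1. For (X₁,…,X_k)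
uniform on the sign vectors with exactly μ·k = j coordinates equal to +1 (encoded by
b : Fin k → Bool with X_i = 1 if b i else −1) and Y_i = β_i + X_i·γ_i, for every ε > 0,
P[Σ Y_i ≤ μ − ε] ≤ 2·exp(−ε²/(2·Σ α_i²)). -/
theorem stmt19 (k : ℕ) (hk : 2 ≤ k) (β γ : Fin k → ℝ)
    (hβ : ∀ i, 0 ≤ β i) (hγ : ∀ i, |γ i| ≤ β i)
    (j : ℕ) (hj1 : 1 ≤ j) (hj2 : j ≤ k / 2)
    (hsum : ∑ i, (β i + |γ i|) = 1) (ε : ℝ) (hε : 0 < ε) :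
    ((Finset.univ.filter (fun b : Fin k → Bool =>
        (Finset.univ.filter (fun i => b i)).card = j ∧
        ∑ i, (β i + (if b i then (1 : ℝ) else -1) * γ i) ≤ (j : ℝ) / k - ε)).card : ℝ) ≤
      2 * Real.exp (-ε ^ 2 / (2 * ∑ i, (β i + |γ i|) ^ 2)) *
        ((Finset.univ.filter (fun b : Fin k → Bool =>
          (Finset.univ.filter (fun i => b i)).card = j)).card : ℝ) :=
  stmt19_general k β γ hγ j hj2 hsum ε hε
end
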